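/- (Uniform bound on the Dirichlet energy of the regularized correctors, resolvent form of the finiteness of the spectral integral ∫ λ^{−1} de_𝔡(λ).) For every μ > 0: E[φ_μ (𝓛 φ_μ)] ≤ β³|ξ|²/α²; in particular sup_{μ>0} E[φ_μ (𝓛 φ_μ)] < ∞. -/

import Mathlib

/-!
Stationarity of `P` makes `Dᵢ*` the `L²(P)`-adjoint of `-Dᵢ`, and both
`𝓛 = -Σᵢ Dᵢ*(ω_{(0,eᵢ)} Dᵢ ·)` and `𝔡 = Σᵢ Dᵢ*(ω_{(0,eᵢ)} ξᵢ)` are in divergence form. Testing the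
corrector equation against `φ_μ` therefore gives
`μ E[φ_μ²] + Σᵢ E[ω_{(0,eᵢ)} (Dᵢφ_μ)²] = -Σᵢ E[ω_{(0,eᵢ)} ξᵢ Dᵢφ_μ]`,
and Young's inequality bounds the right side by `(β|ξ|² + E[φ_μ 𝓛φ_μ]) / 2`.
Hence `E[φ_μ 𝓛φ_μ] ≤ β|ξ|² ≤ β³|ξ|²/α²`.
-/

open MeasureTheory

namespace StochHom

/-- Edges of `ℤ^d`, indexed by their base vertex and their direction:
the pair `(x, i)` represents the edge `(x, x + eᵢ)`. -/
abbrev Edge (d : ℕ) := (Fin d → ℤ) × Fin d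

/-- Environments: conductance functions `ω : 𝔹 → ℝ` (with values in `[α,β]`). -/
abbrev Env (d : ℕ) := Edge d → ℝ

/-- The coordinate unit vector `eᵢ` of `ℤ^d`. -/
def unit {d : ℕ} (i : Fin d) : Fin d → ℤ := Pi.single i 1

/-- The shift `θ_z` of the environment: `(θ_z ω)_{(x,y)} = ω_{(x+z,y+z)}`. -/
def shift {d : ℕ} (z : Fin d → ℤ) (ω : Env d) : Env d :=
  fun e => ω (e.1 + z, e.2)

/-- Forward difference `Dᵢψ(ω) = ψ(θ_{eᵢ}ω) − ψ(ω)`. -/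
def Dgrad {d : ℕ} (ψ : Env d → ℝ) (i : Fin d) (ω : Env d) : ℝ :=
  ψ (shift (unit i) ω) - ψ ω

/-- Backward difference `Dᵢ*ψ(ω) = ψ(ω) − ψ(θ_{−eᵢ}ω)`. -/
def DgradStar {d : ℕ} (ψ : Env d → ℝ) (i : Fin d) (ω : Env d) : ℝ :=
  ψ ω - ψ (shift (-unit i) ω)

/-- The operator `𝓛ψ(ω) = Σ_{z∼0} ω_{(0,z)} (ψ(ω) − ψ(θ_z ω))`, the sum running over the
`2d` nearest neighbors `z` of `0` in `ℤ^d`.  The conductance of the edge `(0, eᵢ)` is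
`ω (0, i)` and that of the edge `(0, −eᵢ)` is `ω (−eᵢ, i)`. -/
def genL {d : ℕ} (ψ : Env d → ℝ) (ω : Env d) : ℝ :=
  ∑ i : Fin d,
    (ω (0, i) * (ψ ω - ψ (shift (unit i) ω))
      + ω (-unit i, i) * (ψ ω - ψ (shift (-unit i) ω)))

/-- The local drift `𝔡(ω) = Σ_{z∼0} ω_{(0,z)} (ξ·z)` in the direction `ξ`. -/
def drift {d : ℕ} (ξ : Fin d → ℝ) (ω : Env d) : ℝ :=
  ∑ i : Fin d, (ω (0, i) * ξ i + ω (-unit i, i) * (-ξ i))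

variable {d : ℕ}

lemma shift_neg_shift (z : Fin d → ℤ) (ω : Env d) : shift (-z) (shift z ω) = ω := by
  funext e
  simp [shift, add_assoc]

lemma shift_shift_neg (z : Fin d → ℤ) (ω : Env d) : shift z (shift (-z) ω) = ω := by
  simpa using shift_neg_shift (-z) ω

def shiftEquiv (z : Fin d → ℤ) : Env d ≃ᵐ Env d where
  toFun := shift z
  invFun := shift (-z)
  left_inv := shift_neg_shift z
  right_inv := shift_shift_neg z
  measurable_toFun := measurable_pi_lambda _ fun _ => measurable_pi_apply _
  measurable_invFun := measurable_pi_lambda _ fun _ => measurable_pi_apply _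

lemma genL_eq_neg_sum_DgradStar (ψ : Env d → ℝ) (ω : Env d) :
    genL ψ ω = -∑ i, DgradStar (fun σ => σ (0, i) * Dgrad ψ i σ) i ω := by
  simp only [genL, DgradStar, Dgrad, shift_shift_neg, ← Finset.sum_neg_distrib]
  refine Finset.sum_congr rfl fun i _ => ?_
  simp only [shift, zero_add]
  ring

lemma drift_eq_sum_DgradStar (ξ : Fin d → ℝ) (ω : Env d) :
    drift ξ ω = ∑ i, DgradStar (fun σ => σ (0, i) * ξ i) i ω := by
  simp only [drift, DgradStar, shift, zero_add]
  exact Finset.sum_congr rfl fun i _ => by ring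

lemma integrable_mul_of_memLp_two {X : Type*} [MeasurableSpace X] {Q : Measure X}
    {f g : X → ℝ} (hf : MemLp f 2 Q) (hg : MemLp g 2 Q) : Integrable (fun x => f x * g x) Q :=
  hf.integrable_mul hg

section StationaryCalculus

variable {P : Measure (Env d)}

lemma memLp_coord_mul {p : ENNReal} {C : ℝ} (hbd : ∀ᵐ ω ∂P, ∀ e, ‖ω e‖ ≤ C) (e : Edge d)
    {f : Env d → ℝ} (hf : MemLp f p P) : MemLp (fun ω => ω e * f ω) p P :=
  hf.mul (memLp_top_of_bound (measurable_pi_apply e).aestronglyMeasurable C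
    (hbd.mono fun _ h => h e))

variable (hshift : ∀ z : Fin d → ℤ, MeasurePreserving (shift z) P P)
include hshift

lemma memLp_comp_shift {f : Env d → ℝ} (hf : MemLp f 2 P) (z : Fin d → ℤ) :
    MemLp (fun ω => f (shift z ω)) 2 P :=
  hf.comp_measurePreserving (hshift z)

lemma memLp_DgradStar {f : Env d → ℝ} (hf : MemLp f 2 P) (i : Fin d) :
    MemLp (DgradStar f i) 2 P :=
  hf.sub (memLp_comp_shift hshift hf _)

lemma memLp_Dgrad {f : Env d → ℝ} (hf : MemLp f 2 P) (i : Fin d) :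
    MemLp (Dgrad f i) 2 P :=
  (memLp_comp_shift hshift hf _).sub hf

theorem integral_mul_DgradStar {χ f : Env d → ℝ} (hχ : MemLp χ 2 P) (hf : MemLp f 2 P)
    (i : Fin d) :
    ∫ ω, χ ω * DgradStar f i ω ∂P = -∫ ω, f ω * Dgrad χ i ω ∂P := by
  have hshifted :
      ∫ ω, χ ω * f (shift (-unit i) ω) ∂P = ∫ ω, χ (shift (unit i) ω) * f ω ∂P := by
    rw [← (hshift (-unit i)).integral_comp' (f := shiftEquiv (-unit i))
      (fun σ => χ (shift (unit i) σ) * f σ)]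
    simp [shiftEquiv, shift_shift_neg]
  simp only [DgradStar, Dgrad, mul_sub]
  have hfs := memLp_comp_shift hshift hf (-unit i)
  have hχe := memLp_comp_shift hshift hχ (unit i)
  rw [integral_sub (integrable_mul_of_memLp_two hχ hf) (integrable_mul_of_memLp_two hχ hfs),
    hshifted, integral_sub (integrable_mul_of_memLp_two hf hχe) (integrable_mul_of_memLp_two hf hχ)]
  simp only [mul_comm (f _)]
  ring

lemma memLp_sum_DgradStar {f : Fin d → Env d → ℝ} (hf : ∀ i, MemLp (f i) 2 P) :
    MemLp (fun ω => ∑ i, DgradStar (f i) i ω) 2 P :=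
  memLp_finsetSum _ fun i _ => memLp_DgradStar hshift (hf i) i

theorem integral_mul_sum_DgradStar {χ : Env d → ℝ} {f : Fin d → Env d → ℝ} (hχ : MemLp χ 2 P)
    (hf : ∀ i, MemLp (f i) 2 P) :
    ∫ ω, χ ω * ∑ i, DgradStar (f i) i ω ∂P = -∑ i, ∫ ω, f i ω * Dgrad χ i ω ∂P := by
  simp only [Finset.mul_sum]
  rw [integral_finsetSum _ fun i _ =>
      integrable_mul_of_memLp_two hχ (memLp_DgradStar hshift (hf i) i),
    ← Finset.sum_neg_distrib]
  exact Finset.sum_congr rfl fun i _ => integral_mul_DgradStar hshift hχ (hf i) i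

variable {C : ℝ} (hbd : ∀ᵐ ω ∂P, ∀ e, ‖ω e‖ ≤ C)
include hbd

lemma memLp_genL {ψ : Env d → ℝ} (hψ : MemLp ψ 2 P) : MemLp (genL ψ) 2 P := by
  simp only [funext (genL_eq_neg_sum_DgradStar ψ)]
  exact (memLp_sum_DgradStar hshift fun i => memLp_coord_mul hbd _ (memLp_Dgrad hshift hψ i)).neg

lemma memLp_drift [IsFiniteMeasure P] (ξ : Fin d → ℝ) : MemLp (drift ξ) 2 P := by
  simp only [funext (drift_eq_sum_DgradStar ξ)]
  exact memLp_sum_DgradStar hshift fun i => memLp_coord_mul hbd _ (memLp_const _)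

theorem integral_mul_genL {χ ψ : Env d → ℝ} (hχ : MemLp χ 2 P) (hψ : MemLp ψ 2 P) :
    ∫ ω, χ ω * genL ψ ω ∂P = ∑ i, ∫ ω, ω (0, i) * Dgrad ψ i ω * Dgrad χ i ω ∂P := by
  simp only [genL_eq_neg_sum_DgradStar, mul_neg, integral_neg]
  rw [integral_mul_sum_DgradStar hshift hχ fun i =>
    memLp_coord_mul hbd _ (memLp_Dgrad hshift hψ i), neg_neg]

theorem integral_mul_drift [IsFiniteMeasure P] (ξ : Fin d → ℝ) {χ : Env d → ℝ}
    (hχ : MemLp χ 2 P) :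
    ∫ ω, χ ω * drift ξ ω ∂P = -∑ i, ∫ ω, ω (0, i) * ξ i * Dgrad χ i ω ∂P := by
  simp only [drift_eq_sum_DgradStar]
  exact integral_mul_sum_DgradStar hshift hχ fun i => memLp_coord_mul hbd _ (memLp_const _)

end StationaryCalculus

theorem integral_mul_genL_le_of_resolvent {P : Measure (Env d)} [IsProbabilityMeasure P]
    (hshift : ∀ z : Fin d → ℤ, MeasurePreserving (shift z) P P) {β : ℝ}
    (hω : ∀ᵐ ω ∂P, ∀ e, ω e ∈ Set.Icc 0 β) (ξ : Fin d → ℝ) {μ : ℝ} (hμ : 0 ≤ μ)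
    {φ : Env d → ℝ} (hφ : MemLp φ 2 P) (heq : ∀ᵐ ω ∂P, μ * φ ω + genL φ ω = drift ξ ω) :
    ∫ ω, φ ω * genL φ ω ∂P ≤ β * ∑ i, ξ i ^ 2 := by
  have hbd : ∀ᵐ ω ∂P, ∀ e, ‖ω e‖ ≤ β := hω.mono fun ω h e => by
    rw [Real.norm_of_nonneg (h e).1]
    exact (h e).2
  set E : Fin d → ℝ := fun i => ∫ ω, ω (0, i) * Dgrad φ i ω * Dgrad φ i ω ∂P
  have hE (i : Fin d) : Integrable (fun ω => ω (0, i) * Dgrad φ i ω * Dgrad φ i ω) P :=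
    integrable_mul_of_memLp_two (memLp_coord_mul hbd _ (memLp_Dgrad hshift hφ i))
      (memLp_Dgrad hshift hφ i)
  have henergy : ∫ ω, φ ω * genL φ ω ∂P = ∑ i, E i := integral_mul_genL hshift hbd hφ hφ
  have htest : ∫ ω, φ ω * genL φ ω ∂P ≤ ∫ ω, φ ω * drift ξ ω ∂P :=
    integral_mono_ae (integrable_mul_of_memLp_two hφ (memLp_genL hshift hbd hφ))
      (integrable_mul_of_memLp_two hφ (memLp_drift hshift hbd ξ))
      (heq.mono fun ω h => by
        dsimp only
        rw [← h]
        nlinarith [mul_nonneg hμ (mul_self_nonneg (φ ω))])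
  -- Young's inequality `-c ξ y ≤ (β ξ² + c y²) / 2` for a conductance `c ∈ [0, β]`
  have hyoung (i : Fin d) :
      -∫ ω, ω (0, i) * ξ i * Dgrad φ i ω ∂P ≤ β * ξ i ^ 2 / 2 + E i / 2 := by
    have hint : Integrable (fun ω => ω (0, i) * ξ i * Dgrad φ i ω) P :=
      integrable_mul_of_memLp_two (memLp_coord_mul hbd _ (memLp_const _))
        (memLp_Dgrad hshift hφ i)
    calc -∫ ω, ω (0, i) * ξ i * Dgrad φ i ω ∂P
        ≤ ∫ ω, (β * ξ i ^ 2 / 2 + ω (0, i) * Dgrad φ i ω * Dgrad φ i ω / 2) ∂P := by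
          rw [← integral_neg]
          refine integral_mono_ae hint.neg ((integrable_const _).add ((hE i).div_const 2))
            (hω.mono fun ω h => ?_)
          obtain ⟨hc0, hcβ⟩ := h (0, i)
          nlinarith [mul_nonneg hc0 (sq_nonneg (ξ i + Dgrad φ i ω)),
            mul_le_mul_of_nonneg_right hcβ (sq_nonneg (ξ i))]
      _ = β * ξ i ^ 2 / 2 + E i / 2 := by
          rw [integral_add (integrable_const _) ((hE i).div_const 2), integral_const,
            integral_div]
          simp [E]
  have hsum := Finset.sum_le_sum fun i (_ : i ∈ Finset.univ) => hyoung i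
  rw [Finset.sum_add_distrib, ← Finset.sum_div, ← Finset.sum_div, ← Finset.mul_sum,
    Finset.sum_neg_distrib, ← integral_mul_drift hshift hbd ξ hφ] at hsum
  linarith

theorem statement5_general {d : ℕ} {α β : ℝ} (hα : 0 < α) (hαβ : α ≤ β)
    (P : Measure (Env d)) [IsProbabilityMeasure P]
    (hsupp : ∀ᵐ ω ∂P, ∀ e, ω e ∈ Set.Icc α β)
    (hshift : ∀ z : Fin d → ℤ, MeasurePreserving (shift z) P P)
    (ξ : Fin d → ℝ) (μ : ℝ) (hμ : 0 < μ)
    (φμ : Env d → ℝ) (hφ : MemLp φμ 2 P)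
    (heq : ∀ᵐ ω ∂P, μ * φμ ω + genL φμ ω = drift ξ ω) :
    ∫ ω, φμ ω * genL φμ ω ∂P ≤ β ^ 3 * (∑ i, ξ i ^ 2) / α ^ 2 := by
  have hnonneg : ∀ᵐ ω ∂P, ∀ e, ω e ∈ Set.Icc 0 β :=
    hsupp.mono fun ω h e => ⟨hα.le.trans (h e).1, (h e).2⟩
  have hratio : 1 ≤ β ^ 2 / α ^ 2 := by
    rw [one_le_div (by positivity)]
    gcongr
  have hbound_nonneg : 0 ≤ β * ∑ i, ξ i ^ 2 :=
    mul_nonneg (hα.le.trans hαβ) (Finset.sum_nonneg fun i _ => sq_nonneg (ξ i))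
  calc ∫ ω, φμ ω * genL φμ ω ∂P
      ≤ β * ∑ i, ξ i ^ 2 := integral_mul_genL_le_of_resolvent hshift hnonneg ξ hμ.le hφ heq
    _ ≤ (β * ∑ i, ξ i ^ 2) * (β ^ 2 / α ^ 2) := le_mul_of_one_le_right hbound_nonneg hratio
    _ = β ^ 3 * (∑ i, ξ i ^ 2) / α ^ 2 := by ring

/-- uniform bound on the Dirichlet energy of the regularized correctors:
for every `μ > 0`, `E[φ_μ (𝓛 φ_μ)] ≤ β³|ξ|²/α²`; in particular
`sup_{μ>0} E[φ_μ (𝓛 φ_μ)] < ∞`. -/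
theorem statement5 {d : ℕ} (hd : 1 ≤ d) {α β : ℝ} (hα : 0 < α) (hαβ : α ≤ β)
    (P : Measure (Env d)) [IsProbabilityMeasure P]
    (hsupp : ∀ᵐ ω ∂P, ∀ e, ω e ∈ Set.Icc α β)
    (hshift : ∀ z : Fin d → ℤ, MeasurePreserving (shift z) P P)
    (ξ : Fin d → ℝ) (μ : ℝ) (hμ : 0 < μ)
    (φμ : Env d → ℝ) (hφ : MemLp φμ 2 P)
    (heq : ∀ᵐ ω ∂P, μ * φμ ω + genL φμ ω = drift ξ ω) :
    ∫ ω, φμ ω * genL φμ ω ∂P ≤ β ^ 3 * (∑ i, ξ i ^ 2) / α ^ 2 :=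
  statement5_general hα hαβ P hsupp hshift ξ μ hμ φμ hφ heq

end StochHom
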